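/- arXiv:2307.06386 — 3 statements merged into one kernel-verified Lean document; each statement's English description precedes it below -/
import Mathlib

section
/- For all n ≥ 1, |N_n - a·α^n| < α^(-n/2), where α is the real root of x^3 - x^2 - 1 and a = α^2/(α^3 + 2). -/
def narayana : ℕ → ℕ
  | 0 => 0
  | 1 => 1
  | 2 => 1
  | n + 3 => narayana (n + 2) + narayana n

/-!
The error `e n = N n - a * α ^ n` satisfies the Narayana recurrence, and the choice of `a` removes
its component along `α`: `e` then satisfies the second-order recurrence whose characteristic
polynomial is `(X ^ 3 - X ^ 2 - 1) / (X - α) = X ^ 2 + (α - 1) X + α (α - 1)`. Its roots are complex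
with squared modulus `α (α - 1) = α⁻¹`, so the positive definite norm form of the recurrence decays
by the factor `α⁻¹` per step; its initial value is small enough to give `(e n) ^ 2 < α ^ (-n)`.
-/

section SecondOrderRecurrence

variable {p q : ℝ} {e : ℕ → ℝ}

/-- `normForm p q x y = (y - β x) (y - β' x)` where `β, β'` are the roots of `X ^ 2 + p X + q`. -/
def normForm (p q x y : ℝ) : ℝ := q * x ^ 2 + p * x * y + y ^ 2

theorem normForm_step (p q x y : ℝ) : normForm p q y (-p * y - q * x) = q * normForm p q x y := by
  unfold normForm; ring

theorem mul_sq_le_normForm (p q x y : ℝ) : (q - p ^ 2 / 4) * x ^ 2 ≤ normForm p q x y := by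
  unfold normForm; nlinarith [sq_nonneg (y + p * x / 2)]

theorem normForm_eq_pow_mul (he : ∀ k, e (k + 2) + p * e (k + 1) + q * e k = 0) (k : ℕ) :
    normForm p q (e k) (e (k + 1)) = q ^ k * normForm p q (e 0) (e 1) := by
  induction k with
  | zero => simp
  | succ k ih =>
    rw [show e (k + 2) = -p * e (k + 1) - q * e k by linear_combination he k, normForm_step, ih]
    ring

theorem sq_lt_pow_of_normForm_lt (he : ∀ k, e (k + 2) + p * e (k + 1) + q * e k = 0)
    (hpq : p ^ 2 < 4 * q) (h₀ : normForm p q (e 0) (e 1) < q - p ^ 2 / 4) (k : ℕ) :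
    e k ^ 2 < q ^ k := by
  have hdisc : 0 < q - p ^ 2 / 4 := by linarith
  have hq : 0 < q := by nlinarith [sq_nonneg p]
  have hbound : (q - p ^ 2 / 4) * e k ^ 2 < (q - p ^ 2 / 4) * q ^ k := calc
    (q - p ^ 2 / 4) * e k ^ 2 ≤ normForm p q (e k) (e (k + 1)) := mul_sq_le_normForm ..
    _ = q ^ k * normForm p q (e 0) (e 1) := normForm_eq_pow_mul he k
    _ < q ^ k * (q - p ^ 2 / 4) := by gcongr
    _ = (q - p ^ 2 / 4) * q ^ k := mul_comm ..
  exact lt_of_mul_lt_mul_left hbound hdisc.le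

end SecondOrderRecurrence

theorem narayana_add_three (n : ℕ) : narayana (n + 3) = narayana (n + 2) + narayana n := rfl

section Narayana

variable {α : ℝ}

noncomputable def narayanaError (α : ℝ) (n : ℕ) : ℝ := narayana n - α ^ 2 / (α ^ 3 + 2) * α ^ n

theorem narayanaError_add_three (hroot : α ^ 3 = α ^ 2 + 1) (n : ℕ) :
    narayanaError α (n + 3) = narayanaError α (n + 2) + narayanaError α n := by
  simp only [narayanaError, narayana_add_three]
  push_cast
  linear_combination (-(α ^ 2 / (α ^ 3 + 2) * α ^ n)) * hroot

/-- The residual of the quadratic factor is multiplied by `α` along any solution of the cubic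
recurrence, so it vanishes identically once it vanishes at `0`. -/
theorem narayanaError_quadratic (hroot : α ^ 3 = α ^ 2 + 1) (n : ℕ) :
    narayanaError α (n + 2) + (α - 1) * narayanaError α (n + 1)
      + α * (α - 1) * narayanaError α n = 0 := by
  induction n with
  | zero =>
    have hden : α ^ 3 + 2 ≠ 0 := by rw [hroot]; positivity
    simp only [narayanaError]
    norm_num [narayana]
    field_simp
    linear_combination (-2 * α) * hroot
  | succ n ih =>
    linear_combination narayanaError_add_three hroot n + α * ih - narayanaError α n * hroot

theorem normForm_narayanaError_zero_lt (hα1 : 1 < α) (hroot : α ^ 3 = α ^ 2 + 1) :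
    normForm (α - 1) (α * (α - 1)) (narayanaError α 0) (narayanaError α 1)
      < α * (α - 1) - (α - 1) ^ 2 / 4 := by
  simp only [normForm, narayanaError]
  norm_num [narayana]
  set a := α ^ 2 / (α ^ 3 + 2)
  have hα_lt : α < 3 / 2 := by nlinarith
  have hα_gt : 7 / 5 < α := by nlinarith
  have ha : a * (α ^ 2 + 3) = α ^ 2 := by
    simp only [a]; rw [hroot]; field_simp; ring
  have ha_lt : a < 3 / 7 := by nlinarith
  have ha_gt : 2 / 5 < a := by nlinarith
  nlinarith [mul_pos (sub_pos.2 ha_lt) (sub_pos.2 ha_gt),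
    mul_pos (sub_pos.2 hα_lt) (sub_pos.2 hα_gt)]

end Narayana

theorem abs_lt_rpow_neg_half_of_sq_lt {α x : ℝ} {n : ℕ} (hα : 0 < α) (h : x ^ 2 < α⁻¹ ^ n) :
    |x| < α ^ (-(n : ℝ) / 2) := by
  apply abs_lt_of_sq_lt_sq _ (by positivity)
  rwa [← Real.rpow_natCast (α ^ _) 2, ← Real.rpow_mul hα.le, Nat.cast_ofNat,
    div_mul_cancel₀ _ two_ne_zero, Real.rpow_neg hα.le, Real.rpow_natCast, ← inv_pow]

theorem narayana_dominant_term_general (α : ℝ) (hα1 : 1 < α) (hroot : α ^ 3 = α ^ 2 + 1)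
    (n : ℕ) :
    |(narayana n : ℝ) - α ^ 2 / (α ^ 3 + 2) * α ^ n| < α ^ (-(n : ℝ) / 2) := by
  have hα0 : 0 < α := zero_lt_one.trans hα1
  have hq : α * (α - 1) = α⁻¹ := by
    field_simp
    linear_combination hroot
  have hdisc : (α - 1) ^ 2 < 4 * (α * (α - 1)) := by nlinarith
  have hsq := sq_lt_pow_of_normForm_lt (narayanaError_quadratic hroot) hdisc
    (normForm_narayanaError_zero_lt hα1 hroot) n
  rw [hq] at hsq
  exact abs_lt_rpow_neg_half_of_sq_lt hα0 hsq

theorem narayana_dominant_term (α : ℝ) (hα1 : 1 < α) (hroot : α ^ 3 = α ^ 2 + 1)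
    (n : ℕ) (hn : 1 ≤ n) :
    |(narayana n : ℝ) - α ^ 2 / (α ^ 3 + 2) * α ^ n| < α ^ (-(n : ℝ) / 2) :=
  narayana_dominant_term_general α hα1 hroot n
end

section
/- If r ≥ 1, H > (4r^2)^r, and H > L/(log L)^r for a real L > e, then L < 2^r · H · (log H)^r. -/
/-!
Dividing out gives `L < H (log L)^r`, so it suffices to show `log L < 2 log H`. Taking logarithms,
`log L < log H + r log log L`; if `log L ≥ 2 log H` this forces `log L < 2r log log L`. But `x ↦ x`
beats `x ↦ 2r log x` as soon as `2r log (4r²) < x` (below `4r²` by monotonicity of `log`, above it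
because `log x < √x`), and `log L ≥ 2 log H > 2r log (4r²)` by the hypothesis on `H`.
-/

open Real

namespace Real

theorem log_lt_sqrt {x : ℝ} (hx : 0 < x) : log x < √x := by
  have hs : 0 < √x := sqrt_pos.2 hx
  -- `log t ≤ t - 1` at `t = √x / 2`, together with `log 2 < 1`
  have h := log_le_sub_one_of_pos (half_pos hs)
  rw [log_div hs.ne' two_ne_zero, log_sqrt hx.le] at h
  linarith [log_two_lt_d9]

theorem mul_log_lt_self_of_sq_lt {c x : ℝ} (hc : 0 ≤ c) (h : c ^ 2 < x) : c * log x < x := by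
  have hx : 0 < x := (sq_nonneg c).trans_lt h
  have hcs : c < √x := (lt_sqrt hc).2 h
  calc c * log x ≤ c * √x := mul_le_mul_of_nonneg_left (log_lt_sqrt hx).le hc
    _ < √x * √x := mul_lt_mul_of_pos_right hcs (hc.trans_lt hcs)
    _ = x := mul_self_sqrt hx.le

theorem mul_log_lt_self {c x : ℝ} (hc : 0 ≤ c) (hx : 0 < x) (h : c * log (c ^ 2) < x) :
    c * log x < x := by
  rcases le_or_gt x (c ^ 2) with hle | hlt
  · exact (mul_le_mul_of_nonneg_left (log_le_log hx hle) hc).trans_lt h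
  · exact mul_log_lt_self_of_sq_lt hc hlt

end Real

theorem lt_two_mul_of_lt_add_mul_log {r x y : ℝ} (hr : 0 ≤ r) (hx : 0 < x)
    (hy : r * log (4 * r ^ 2) < y) (h : x < y + r * log x) : x < 2 * y := by
  by_contra! hxy
  have hc : 2 * r * log ((2 * r) ^ 2) < x := by
    rw [show (2 * r) ^ 2 = 4 * r ^ 2 by ring]; linarith
  linarith [mul_log_lt_self (by positivity) hx hc]

theorem sanchez_luca_general (r : ℕ) (H L : ℝ)
    (hH : H > (4 * (r : ℝ) ^ 2) ^ r) (hL : Real.exp 1 < L)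
    (hHL : H > L / Real.log L ^ r) :
    L < 2 ^ r * H * Real.log H ^ r := by
  have hL₀ : 0 < L := (exp_pos 1).trans hL
  have hlogL : 1 < log L := (lt_log_iff_exp_lt hL₀).2 hL
  have hLH : L < H * log L ^ r := (div_lt_iff₀ (by positivity)).1 hHL
  have hH₀ : 0 < H := (by positivity : 0 < L / log L ^ r).trans hHL
  have hlog : log L < log H + r * log (log L) := by
    simpa [log_mul hH₀.ne' (by positivity : log L ^ r ≠ 0), log_pow] using log_lt_log hL₀ hLH
  have hlogH : r * log (4 * (r : ℝ) ^ 2) < log H := by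
    rcases r.eq_zero_or_pos with rfl | hr
    · simpa using log_pos (by simpa using hH)
    · simpa [log_pow] using log_lt_log (by positivity) hH
  have hkey : log L < 2 * log H :=
    lt_two_mul_of_lt_add_mul_log r.cast_nonneg (by linarith) hlogH hlog
  calc L < H * log L ^ r := hLH
    _ ≤ H * (2 * log H) ^ r := by gcongr
    _ = 2 ^ r * H * log H ^ r := by ring

theorem sanchez_luca (r : ℕ) (H L : ℝ) (hr : 1 ≤ r)
    (hH : H > (4 * (r : ℝ) ^ 2) ^ r) (hL : Real.exp 1 < L)
    (hHL : H > L / Real.log L ^ r) :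
    L < 2 ^ r * H * Real.log H ^ r :=
  sanchez_luca_general r H L hH hL hHL
end

section
/- Let α > 1 be the real root of x^3 - x^2 - 1 and a = α^2/(α^3+2). For integers g ≥ 2, k ≥ 1, and ℓ+m+n ≥ 3 with 1 ≤ d1,d2,d3 ≤ g-1, the quantity a·(g-1)^3/(d1·d2·d3) · α^k · g^{-(ℓ+m+n)} is never equal to 1. -/
/-!
Since `α ^ 3 + 2 = α ^ 2 + 3`, the equation would say `α ^ (k + 2) * q = α ^ 2 + 3` for a rational
`q`. The polynomial `X ^ 3 - X ^ 2 - 1` has no rational root, so it is the minimal polynomial of `α`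
and `1, α, α ^ 2` are linearly independent over `ℚ`. Writing `α ^ n = a + b α + c α ^ 2` with
`a, b, c ∈ ℕ`, the equation forces `b = 0` and `a = 3 c`, which never happens: `b > 0` once `n ≥ 4`,
and `n ≤ 3` is checked directly.
-/

open Polynomial

theorem rat_pow_three_ne_sq_add_one (x : ℚ) : x ^ 3 ≠ x ^ 2 + 1 := by
  intro hx
  have hmonic : (X ^ 3 - X ^ 2 - 1 : ℤ[X]).Monic := by monicity!
  obtain ⟨r, rfl, -⟩ := exists_integer_of_is_root_of_monic hmonic (r := x) (by simp [hx])
  have hr : r ^ 3 = r ^ 2 + 1 := by rw [algebraMap_int_eq, eq_intCast] at hx; exact_mod_cast hx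
  rcases Int.eq_one_or_neg_one_of_mul_eq_one (u := r) (v := r ^ 2 - r) (by linear_combination hr)
    with rfl | rfl <;> norm_num at hr

theorem irreducible_X_pow_three_sub_X_sq_sub_one : Irreducible (X ^ 3 - X ^ 2 - 1 : ℚ[X]) := by
  refine irreducible_of_degree_le_three_of_not_isRoot ?_ fun x hx => ?_
  · rw [show (X ^ 3 - X ^ 2 - 1 : ℚ[X]).natDegree = 3 by compute_degree!]; decide
  · exact rat_pow_three_ne_sq_add_one x (by simp at hx; linear_combination hx)

def powCoeffs : ℕ → ℕ × ℕ × ℕ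
  | 0 => (1, 0, 0)
  | n + 1 => ((powCoeffs n).2.2, (powCoeffs n).1, (powCoeffs n).2.1 + (powCoeffs n).2.2)

theorem powCoeffs_add_four_pos (n : ℕ) :
    0 < (powCoeffs (n + 4)).1 ∧ 0 < (powCoeffs (n + 4)).2.1 ∧ 0 < (powCoeffs (n + 4)).2.2 := by
  induction n with
  | zero => decide
  | succ n ih =>
    simp only [powCoeffs] at ih ⊢
    omega

theorem powCoeffs_fst_ne_three_mul (n : ℕ) (hb : (powCoeffs n).2.1 = 0) :
    (powCoeffs n).1 ≠ 3 * (powCoeffs n).2.2 := by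
  match n, hb with
  | 0, hb | 1, hb | 2, hb | 3, hb => revert hb; decide
  | n + 4, hb => exact absurd hb (powCoeffs_add_four_pos n).2.1.ne'

section RootOfCubic

variable {K : Type*} [Field K] [CharZero K] {α : K}

theorem minpoly_eq_X_pow_three_sub_X_sq_sub_one (hα : α ^ 3 = α ^ 2 + 1) :
    minpoly ℚ α = X ^ 3 - X ^ 2 - 1 :=
  (minpoly.eq_of_irreducible_of_monic irreducible_X_pow_three_sub_X_sq_sub_one
    (by simp [hα]) (by monicity!)).symm

theorem eq_zero_of_add_mul_add_mul_sq_eq_zero (hα : α ^ 3 = α ^ 2 + 1) {p q r : ℚ}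
    (h : p + q * α + r * α ^ 2 = 0) : p = 0 ∧ q = 0 ∧ r = 0 := by
  have hdeg : (minpoly ℚ α).natDegree = 3 := by
    rw [minpoly_eq_X_pow_three_sub_X_sq_sub_one hα]; compute_degree!
  have hli := linearIndependent_pow (K := ℚ) α
  rw [hdeg, Fintype.linearIndependent_iff] at hli
  have hzero := hli ![p, q, r] (by simpa [Fin.sum_univ_three, Algebra.smul_def] using h)
  exact ⟨hzero 0, hzero 1, hzero 2⟩

theorem pow_eq_powCoeffs (hα : α ^ 3 = α ^ 2 + 1) (n : ℕ) :
    α ^ n = (powCoeffs n).1 + (powCoeffs n).2.1 * α + (powCoeffs n).2.2 * α ^ 2 := by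
  induction n with
  | zero => simp [powCoeffs]
  | succ n ih =>
    rw [pow_succ, ih, powCoeffs]
    push_cast
    linear_combination ((powCoeffs n).2.2 : K) * hα

theorem pow_mul_rat_ne_sq_add_three (hα : α ^ 3 = α ^ 2 + 1) (n : ℕ) (q : ℚ) :
    α ^ n * q ≠ α ^ 2 + 3 := by
  intro h
  rw [pow_eq_powCoeffs hα] at h
  set a := (powCoeffs n).1
  set b := (powCoeffs n).2.1
  set c := (powCoeffs n).2.2
  obtain ⟨ha, hb, hc⟩ := eq_zero_of_add_mul_add_mul_sq_eq_zero hα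
    (p := a * q - 3) (q := b * q) (r := c * q - 1) (by push_cast; linear_combination h)
  have hq : q ≠ 0 := by rintro rfl; norm_num at hc
  have hac : (a : ℚ) = 3 * c := mul_right_cancel₀ hq (by linear_combination ha - 3 * hc)
  exact powCoeffs_fst_ne_three_mul n (by simpa [hq] using hb) (by exact_mod_cast hac)

end RootOfCubic

theorem gamma_one_ne_zero_general (α : ℝ) (hroot : α ^ 3 = α ^ 2 + 1)
    (g k ℓ m n d1 d2 d3 : ℕ) :
    α ^ 2 / (α ^ 3 + 2) * ((g : ℝ) - 1) ^ 3 / (d1 * d2 * d3) * α ^ k *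
      (g : ℝ) ^ (-((ℓ : ℤ) + m + n)) ≠ 1 := by
  set q : ℚ := ((g : ℚ) - 1) ^ 3 / (d1 * d2 * d3) * (g : ℚ) ^ (-((ℓ : ℤ) + m + n))
  have hden : α ^ 3 + 2 = α ^ 2 + 3 := by rw [hroot]; ring
  have hexpr : α ^ 2 / (α ^ 3 + 2) * ((g : ℝ) - 1) ^ 3 / (d1 * d2 * d3) * α ^ k *
      (g : ℝ) ^ (-((ℓ : ℤ) + m + n)) = α ^ (k + 2) * q / (α ^ 2 + 3) := by
    rw [hden]; push_cast [q]; ring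
  rw [hexpr, ne_eq, div_eq_one_iff_eq (by positivity)]
  exact pow_mul_rat_ne_sq_add_three hroot (k + 2) q

theorem gamma_one_ne_zero (α : ℝ) (hα1 : 1 < α) (hroot : α ^ 3 = α ^ 2 + 1)
    (g k ℓ m n d1 d2 d3 : ℕ) (hg : 2 ≤ g) (hk : 1 ≤ k) (hlmn : 3 ≤ ℓ + m + n)
    (hd1 : 1 ≤ d1) (hd1' : d1 ≤ g - 1)
    (hd2 : 1 ≤ d2) (hd2' : d2 ≤ g - 1)
    (hd3 : 1 ≤ d3) (hd3' : d3 ≤ g - 1) :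
    α ^ 2 / (α ^ 3 + 2) * ((g : ℝ) - 1) ^ 3 / (d1 * d2 * d3) * α ^ k *
      (g : ℝ) ^ (-((ℓ : ℤ) + m + n)) ≠ 1 :=
  gamma_one_ne_zero_general α hroot g k ℓ m n d1 d2 d3
end
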